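/- Let 𝔗 = (V, E_T, 𝔏) be a Basin Hierarchy Tree of a signal ((V,E), f) over a finite connected graph. Then the 0-dimensional persistence diagram of (G, f) coincides, up to trivial intervals [a,a), with the multiset { [f(v), f(𝔏(v))) : v ∈ V }. -/

import Mathlib

open scoped Classical

/-- A (multi)graph given by source and target maps on an edge type. -/
structure STGraph (V E : Type*) where
  src : E → V
  tgt : E → V

namespace STGraph

variable {V E : Type*} (G : STGraph V E)

/-- `e` is an edge joining `x` and `y`. -/
def Ends (e : E) (x y : V) : Prop :=
  (G.src e = x ∧ G.tgt e = y) ∨ (G.src e = y ∧ G.tgt e = x)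

/-- The graph is connected. -/
def Connected : Prop :=
  ∀ a b : V, Relation.ReflTransGen (fun x y => ∃ e, G.Ends e x y) a b

/-- Extension of a vertex signal to vertices and edges, `f(e) = max f(V(e))`. -/
def sig (f : V → ℝ) : V ⊕ E → ℝ
  | .inl v => f v
  | .inr e => max (f (G.src e)) (f (G.tgt e))

/-- `pos` realizes a `G`-ordering: a total ordering of `V ⊕ E` along which the
signal is nondecreasing and every vertex precedes each edge incident to it. -/
def IsGOrdering (f : V → ℝ) (pos : V ⊕ E → ℕ) : Prop :=
  Function.Injective pos ∧
  (∀ a b, pos a ≤ pos b → G.sig f a ≤ G.sig f b) ∧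
  (∀ e : E, pos (.inl (G.src e)) < pos (.inr e) ∧ pos (.inl (G.tgt e)) < pos (.inr e))

/-- Connectivity within the subgraph `G_{<k}` of elements with position `< k`. -/
def ConnB (pos : V ⊕ E → ℕ) (k : ℕ) (a b : V) : Prop :=
  pos (.inl a) < k ∧ pos (.inl b) < k ∧
    Relation.ReflTransGen (fun x y => ∃ e, pos (.inr e) < k ∧ G.Ends e x y) a b

/-- `m` is the `≺`-minimum of the connected component of `v` in `G_{<k}`. -/
def IsCompMin (pos : V ⊕ E → ℕ) (k : ℕ) (m v : V) : Prop :=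
  G.ConnB pos k m v ∧ ∀ w, G.ConnB pos k v w → pos (.inl m) ≤ pos (.inl w)

/-- The `≺`-maximal endpoint of an edge. -/
def maxEnd (pos : V ⊕ E → ℕ) (e : E) : V :=
  if pos (.inl (G.src e)) ≤ pos (.inl (G.tgt e)) then G.tgt e else G.src e

/-- `(p, L)` is a basin hierarchy tree of the signal `(G, f)` with respect to the
`G`-ordering `pos`, rooted at the `≺`-minimal vertex `r`, with linking-vertex map `L`. -/
structure IsBHT (f : V → ℝ) (pos : V ⊕ E → ℕ) (r : V) (p : V → V) (L : V → V) : Prop where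
  ordering : G.IsGOrdering f pos
  root_min : ∀ v, pos (.inl r) ≤ pos (.inl v)
  root_fix : p r = r
  reaches : ∀ v, ∃ n, p^[n] v = r
  spec : ∀ v, v ≠ r → ∃ e : E,
    G.IsCompMin pos (pos (.inr e)) v v ∧
    G.IsCompMin pos (pos (.inr e) + 1) (p v) v ∧
    L v = G.maxEnd pos e

end STGraph

/-- `u` is an ancestor of `v` in the tree with parent map `p` (`u ⪯_T v`). -/
def Anc {V : Type*} (p : V → V) (u v : V) : Prop := ∃ n, p^[n] v = u

/-- `f(𝔏(v))`, with value `+∞` at the root. -/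
noncomputable def fLink {V : Type*} (f : V → ℝ) (r : V) (L : V → V) (v : V) : EReal :=
  if v = r then ⊤ else (f (L v) : EReal)

/-- The persistence `pers(v) = f(𝔏(v)) - f(v)` of a vertex in a BHT. -/
noncomputable def persBHT {V : Type*} (f : V → ℝ) (r : V) (L : V → V) (v : V) : EReal :=
  fLink f r L v - (f v : EReal)

namespace STGraph

variable {V E : Type*} (G : STGraph V E)

/-- The component of `v` dies at the edge `e`: `v` is the minimum of its component
just before `e` is added, and no longer after. -/
def DiesAt (pos : V ⊕ E → ℕ) (v : V) (e : E) : Prop :=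
  G.IsCompMin pos (pos (.inr e)) v v ∧ ¬ G.IsCompMin pos (pos (.inr e) + 1) v v

/-- The death value of the component created by `v` (`+∞` if permanent). -/
noncomputable def deathVal (f : V → ℝ) (pos : V ⊕ E → ℕ) (v : V) : EReal :=
  if h : ∃ e, G.DiesAt pos v e then ((G.sig f (.inr h.choose) : ℝ) : EReal) else ⊤

/-- The degree-0 persistence diagram of `(G, f)`, as a multiset of intervals
`[birth, death)` (including trivial intervals). -/
noncomputable def PD0 [Fintype V] (f : V → ℝ) (pos : V ⊕ E → ℕ) : Multiset (EReal × EReal) :=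
  Finset.univ.val.map fun v : V => ((f v : EReal), G.deathVal f pos v)

end STGraph

/-- The nontrivial part of a multiset of intervals. -/
noncomputable def nontriv (M : Multiset (EReal × EReal)) : Multiset (EReal × EReal) :=
  M.filter fun ab => ab.1 < ab.2

/-- The 0-low-persistence filter associated to a BHT `(p, L)` rooted at `r`. -/
noncomputable def LPF {V : Type*} [Fintype V] (f : V → ℝ) (r : V) (p L : V → V)
    (ε : ℝ) (v : V) : ℝ :=
  (insert (f v) ((Finset.univ.filter fun u => Anc p u v ∧ persBHT f r L u < (ε : EReal)).image
    fun u => f (L u))).max' (Finset.insert_nonempty _ _)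

/-!
A non-root vertex `v` of the BHT is the `≺`-minimum of its component just before its edge `e`,
while `p v ≠ v` is the minimum just after, so the component born at `v` dies exactly at `e`; as the
ordering is monotone, `f(e) = f(maxEnd e) = f(𝔏 v)`. The root is the global minimum and never dies.
So the two diagrams agree interval by interval, trivial intervals included.
-/

namespace STGraph

open Relation

variable {V E : Type*} {G : STGraph V E} {f : V → ℝ} {pos : V ⊕ E → ℕ} {r : V} {p L : V → V}

theorem ConnB.refl {k : ℕ} {a : V} (h : pos (.inl a) < k) : G.ConnB pos k a a :=
  ⟨h, h, ReflTransGen.refl⟩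

theorem ConnB.symm {k : ℕ} {a b : V} (h : G.ConnB pos k a b) : G.ConnB pos k b a :=
  ⟨h.2.1, h.1, ReflTransGen.mono (fun _ _ ⟨e, hk, he⟩ => ⟨e, hk, Or.symm he⟩) _ _ h.2.2.swap⟩

theorem ConnB.mono {k k' : ℕ} (hk : k ≤ k') {a b : V} (h : G.ConnB pos k a b) :
    G.ConnB pos k' a b :=
  ⟨h.1.trans_le hk, h.2.1.trans_le hk,
    ReflTransGen.mono (fun _ _ ⟨e, he, hends⟩ => ⟨e, he.trans_le hk, hends⟩) _ _ h.2.2⟩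

theorem IsCompMin.of_le {k k' : ℕ} (hk : k ≤ k') {v : V} (hv : pos (.inl v) < k)
    (h : G.IsCompMin pos k' v v) : G.IsCompMin pos k v v :=
  ⟨ConnB.refl hv, fun w hw => h.2 w (hw.mono hk)⟩

theorem DiesAt.unique (hinj : Function.Injective pos) {v : V} {e e' : E}
    (h : G.DiesAt pos v e) (h' : G.DiesAt pos v e') : e = e' := by
  have no_later_death {e₁ e₂ : E} (hlt : pos (.inr e₁) < pos (.inr e₂)) (h₁ : G.DiesAt pos v e₁)
      (h₂ : G.DiesAt pos v e₂) : False :=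
    h₁.2 (h₂.1.of_le hlt (h₁.1.1.1.trans (Nat.lt_succ_self _)))
  rcases lt_trichotomy (pos (.inr e)) (pos (.inr e')) with hlt | heq | hlt
  · exact (no_later_death hlt h h').elim
  · exact Sum.inr_injective (hinj heq)
  · exact (no_later_death hlt h' h).elim

theorem deathVal_eq_of_diesAt (hinj : Function.Injective pos) {v : V} {e : E}
    (h : G.DiesAt pos v e) : G.deathVal f pos v = G.sig f (.inr e) := by
  have hex : ∃ e, G.DiesAt pos v e := ⟨e, h⟩
  rw [deathVal, dif_pos hex, hex.choose_spec.unique hinj h]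

theorem IsGOrdering.sig_inr (hord : G.IsGOrdering f pos) (e : E) :
    G.sig f (.inr e) = f (G.maxEnd pos e) := by
  unfold maxEnd
  split_ifs with hle
  · exact max_eq_right (hord.2.1 _ _ hle)
  · exact max_eq_left (hord.2.1 _ _ (not_le.mp hle).le)

namespace IsBHT

theorem not_diesAt_root (hbht : G.IsBHT f pos r p L) (e : E) : ¬ G.DiesAt pos r e :=
  fun h => h.2 ⟨ConnB.refl (h.1.1.1.trans (Nat.lt_succ_self _)), fun w _ => hbht.root_min w⟩

theorem parent_ne (hbht : G.IsBHT f pos r p L) {v : V} (hv : v ≠ r) : p v ≠ v := by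
  intro hfix
  obtain ⟨n, hn⟩ := hbht.reaches v
  exact hv (by rwa [Function.iterate_fixed hfix] at hn)

theorem exists_diesAt (hbht : G.IsBHT f pos r p L) {v : V} (hv : v ≠ r) :
    ∃ e, G.DiesAt pos v e ∧ L v = G.maxEnd pos e := by
  obtain ⟨e, hmin, hpmin, hL⟩ := hbht.spec v hv
  refine ⟨e, ⟨hmin, fun hvmin => hbht.parent_ne hv ?_⟩, hL⟩
  -- after `e`, both `v` and `p v` are the minimum of the same component
  have hle : pos (.inl v) ≤ pos (.inl (p v)) := hvmin.2 _ hpmin.1.symm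
  have hge : pos (.inl (p v)) ≤ pos (.inl v) := hpmin.2 _ (ConnB.refl hvmin.1.1)
  exact Sum.inl_injective (hbht.ordering.1 (le_antisymm hge hle))

theorem deathVal_eq_fLink (hbht : G.IsBHT f pos r p L) (v : V) :
    G.deathVal f pos v = fLink f r L v := by
  by_cases hv : v = r
  · subst hv
    rw [deathVal, dif_neg fun ⟨e, h⟩ => hbht.not_diesAt_root e h, fLink, if_pos rfl]
  · obtain ⟨e, hdies, hL⟩ := hbht.exists_diesAt hv
    rw [deathVal_eq_of_diesAt hbht.ordering.1 hdies, hbht.ordering.sig_inr, fLink, if_neg hv, hL]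

end IsBHT

end STGraph

theorem bht_encodes_PD0_general {V E : Type*} [Fintype V]
    (G : STGraph V E) (f : V → ℝ) (pos : V ⊕ E → ℕ)
    (r : V) (p L : V → V) (hbht : G.IsBHT f pos r p L) :
    nontriv (G.PD0 f pos) =
      nontriv (Finset.univ.val.map fun v : V => ((f v : EReal), fLink f r L v)) := by
  simp only [STGraph.PD0, hbht.deathVal_eq_fLink]

/-- The Basin Hierarchy Tree encodes the 0-dimensional persistent homology: up to
trivial intervals, `PD₀(G, f)` is the multiset `{ [f(v), f(𝔏(v))) : v ∈ V }`. -/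
theorem bht_encodes_PD0 {V E : Type*} [Fintype V] [Fintype E]
    (G : STGraph V E) (hG : G.Connected) (f : V → ℝ) (pos : V ⊕ E → ℕ)
    (r : V) (p L : V → V) (hbht : G.IsBHT f pos r p L) :
    nontriv (G.PD0 f pos) =
      nontriv (Finset.univ.val.map fun v : V => ((f v : EReal), fLink f r L v)) :=
  bht_encodes_PD0_general G f pos r p L hbht
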